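/- arXiv:2105.13134 — 2 statements merged into one kernel-verified Lean document; each statement's English description precedes it below -/
import Mathlib

section
/- The full excitation graph is transitive: if (γ₀, γ₁) ∈ E^full and (γ₁, γ₂) ∈ E^full, then (γ₀, γ₂) ∈ E^full. -/
/-!
Two excitations compose into one. If `γ₁ = α₁ ∨ γ₀` and `γ₂ = α₂ ∨ γ₁`, then `γ₂ = α ∨ γ₀` for
the state `α` whose virtual part is `virt α₁ ∪ virt α₂` and whose occupied part is `occ α₁` minus
the orbitals of `γ₀` that `α₂` vacates. Particle-number bookkeeping (each virtual orbital of an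
excitation vacates exactly one occupied orbital) gives `|α| = N` and `(α, γ₀) ∈ 𝓛`, and `α ≠ 0`
because `α = 0` would force `virt α₁ = ∅` and `occ α₁ = 0`, i.e. `α₁ = 0`.
-/

open Finset

namespace CC

variable {Λ : Type*} [DecidableEq Λ]

/-- The occupied part of `α` with respect to the reference state `ref`. -/
def occ (ref α : Finset Λ) : Finset Λ := α ∩ ref

/-- The virtual part of `α` with respect to the reference state `ref`. -/
def virt (ref α : Finset Λ) : Finset Λ := α \ ref

/-- The join operation `α ∨ β = (occ α ∩ occ β) ∪ (virt α ∪ virt β)`. -/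
def exJoin (ref α β : Finset Λ) : Finset Λ :=
  (occ ref α ∩ occ ref β) ∪ (virt ref α ∪ virt ref β)

/-- The meet operation `α ∧ β = (occ α ∪ occ β) ∪ (virt α ∩ virt β)`. -/
def exMeet (ref α β : Finset Λ) : Finset Λ :=
  (occ ref α ∪ occ ref β) ∪ (virt ref α ∩ virt ref β)

/-- The rank `rk α = |virt α|`. -/
def rk (ref α : Finset Λ) : ℕ := (virt ref α).card

/-- The set `𝓛` of compatible pairs of states: both have `N` elements,
`|occ α ∪ occ β| = N` and `virt α ∩ virt β = ∅`. -/
def memL (ref : Finset Λ) (N : ℕ) (α β : Finset Λ) : Prop :=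
  α.card = N ∧ β.card = N ∧ (occ ref α ∪ occ ref β).card = N ∧
    virt ref α ∩ virt ref β = ∅

/-- The edge relation of the full excitation graph:
`(β, γ) ∈ E^full` iff `γ = α ∨ β` for some `α` with `(α, β) ∈ 𝓛` and `α ≠ ref`. -/
def EFull (ref : Finset Λ) (N : ℕ) (β γ : Finset Λ) : Prop :=
  ∃ α : Finset Λ, memL ref N α β ∧ α ≠ ref ∧ γ = exJoin ref α β

section OccVirt

variable {ref : Finset Λ}

theorem occ_subset (ref s : Finset Λ) : occ ref s ⊆ ref := inter_subset_right

theorem disjoint_virt (ref s : Finset Λ) : Disjoint (virt ref s) ref := sdiff_disjoint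

theorem occ_union_virt (ref s : Finset Λ) : occ ref s ∪ virt ref s = s := by
  rw [union_comm]; exact sdiff_union_inter s ref

theorem card_occ_add_card_virt (ref s : Finset Λ) : #(occ ref s) + #(virt ref s) = #s :=
  card_inter_add_card_sdiff s ref

theorem eq_of_occ_eq_of_virt_eq {s t : Finset Λ} (ho : occ ref s = occ ref t)
    (hv : virt ref s = virt ref t) : s = t := by
  rw [← occ_union_virt ref s, ← occ_union_virt ref t, ho, hv]

theorem occ_union_of_subset_of_disjoint {A V : Finset Λ} (hA : A ⊆ ref) (hV : Disjoint V ref) :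
    occ ref (A ∪ V) = A := by
  rw [occ, union_inter_distrib_right, inter_eq_left.2 hA, disjoint_iff_inter_eq_empty.1 hV,
    union_empty]

theorem virt_union_of_subset_of_disjoint {A V : Finset Λ} (hA : A ⊆ ref) (hV : Disjoint V ref) :
    virt ref (A ∪ V) = V := by
  rw [virt, union_sdiff_distrib, sdiff_eq_empty_iff_subset.2 hA, sdiff_eq_self_of_disjoint hV,
    empty_union]

theorem occ_exJoin (ref α β : Finset Λ) : occ ref (exJoin ref α β) = occ ref α ∩ occ ref β :=
  occ_union_of_subset_of_disjoint (inter_subset_left.trans (occ_subset ref α))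
    (disjoint_union_left.2 ⟨disjoint_virt ref α, disjoint_virt ref β⟩)

theorem virt_exJoin (ref α β : Finset Λ) : virt ref (exJoin ref α β) = virt ref α ∪ virt ref β :=
  virt_union_of_subset_of_disjoint (inter_subset_left.trans (occ_subset ref α))
    (disjoint_union_left.2 ⟨disjoint_virt ref α, disjoint_virt ref β⟩)

variable {N : ℕ} {α β : Finset Λ}

theorem memL.disjoint_virt (h : memL ref N α β) : Disjoint (virt ref α) (virt ref β) :=
  disjoint_iff_inter_eq_empty.2 h.2.2.2

theorem memL.card_occ_exJoin_add_card_virt (h : memL ref N α β) :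
    #(occ ref (exJoin ref α β)) + #(virt ref α) = #(occ ref β) := by
  have hα := card_occ_add_card_virt ref α
  have hunion := card_union_add_card_inter (occ ref α) (occ ref β)
  rw [occ_exJoin]
  obtain ⟨hαN, -, hN, -⟩ := h
  omega

end OccVirt

/-- A single excitation of `β` with the same effect as `α₁` followed by `α₂`
(see `exJoin_exComp`). -/
def exComp (ref α₁ α₂ β : Finset Λ) : Finset Λ :=
  (occ ref α₁ \ (occ ref β \ occ ref α₂)) ∪ (virt ref α₁ ∪ virt ref α₂)

section Composition

variable {ref : Finset Λ} {N : ℕ} {α₁ α₂ β : Finset Λ}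

theorem occ_exComp : occ ref (exComp ref α₁ α₂ β) = occ ref α₁ \ (occ ref β \ occ ref α₂) :=
  occ_union_of_subset_of_disjoint (sdiff_subset.trans (occ_subset ref α₁))
    (disjoint_union_left.2 ⟨disjoint_virt ref α₁, disjoint_virt ref α₂⟩)

theorem virt_exComp : virt ref (exComp ref α₁ α₂ β) = virt ref α₁ ∪ virt ref α₂ :=
  virt_union_of_subset_of_disjoint (sdiff_subset.trans (occ_subset ref α₁))
    (disjoint_union_left.2 ⟨disjoint_virt ref α₁, disjoint_virt ref α₂⟩)

theorem exJoin_exComp :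
    exJoin ref (exComp ref α₁ α₂ β) β = exJoin ref α₂ (exJoin ref α₁ β) := by
  apply eq_of_occ_eq_of_virt_eq
  · rw [occ_exJoin, occ_exJoin, occ_exJoin, occ_exComp]
    ext x; simp only [mem_inter, mem_sdiff]; tauto
  · rw [virt_exJoin, virt_exJoin, virt_exJoin, virt_exComp, union_comm (virt ref α₁),
      union_assoc]

theorem exComp_ne_ref (hα₁ : α₁ ≠ ref) : exComp ref α₁ α₂ β ≠ ref := by
  intro h
  have hocc := occ_exComp (ref := ref) (α₁ := α₁) (α₂ := α₂) (β := β)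
  have hvirt := virt_exComp (ref := ref) (α₁ := α₁) (α₂ := α₂) (β := β)
  rw [h, show occ ref ref = ref from inter_self ref] at hocc
  rw [h, show virt ref ref = ∅ from sdiff_self, eq_comm, union_eq_empty] at hvirt
  apply hα₁
  rw [← occ_union_virt ref α₁, hvirt.1, union_empty]
  exact (occ_subset ref α₁).antisymm (hocc.subset.trans sdiff_subset)

theorem disjoint_virt_virt_of_memL_exJoin (h₂ : memL ref N α₂ (exJoin ref α₁ β)) :
    Disjoint (virt ref α₂) (virt ref α₁) ∧ Disjoint (virt ref α₂) (virt ref β) := by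
  rw [← disjoint_union_right, ← virt_exJoin]; exact h₂.disjoint_virt

/-- `α₂` vacates `#(virt α₂)` orbitals of `occ α₁ ∩ occ β`, which is what `exComp` removes from
`occ α₁`, while it adds `virt α₂`. -/
theorem card_exComp (h₁ : #α₁ = N) (h₂ : memL ref N α₂ (exJoin ref α₁ β)) :
    #(exComp ref α₁ α₂ β) = N := by
  have hremoved :
      occ ref α₁ ∩ (occ ref β \ occ ref α₂) = occ ref (exJoin ref α₁ β) \ occ ref α₂ := by
    rw [occ_exJoin, inter_sdiff_assoc]
  have hvacated := h₂.card_occ_exJoin_add_card_virt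
  rw [occ_exJoin ref α₂, inter_comm] at hvacated
  have hsplit₁ := card_sdiff_add_card_inter (occ ref α₁) (occ ref β \ occ ref α₂)
  have hsplit₂ := card_sdiff_add_card_inter (occ ref (exJoin ref α₁ β)) (occ ref α₂)
  have hvirt := card_union_of_disjoint (disjoint_virt_virt_of_memL_exJoin h₂).1.symm
  rw [hremoved] at hsplit₁
  rw [← card_occ_add_card_virt ref, occ_exComp, virt_exComp, hvirt, ← h₁,
    ← card_occ_add_card_virt ref α₁]
  omega

theorem memL_exComp (h₁ : memL ref N α₁ β) (h₂ : memL ref N α₂ (exJoin ref α₁ β)) :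
    memL ref N (exComp ref α₁ α₂ β) β := by
  refine ⟨card_exComp h₁.1 h₂, h₁.2.1, ?_, ?_⟩
  · have hunion : occ ref (exComp ref α₁ α₂ β) ∪ occ ref β = occ ref α₁ ∪ occ ref β := by
      rw [occ_exComp]; ext x; simp only [mem_union, mem_sdiff]; tauto
    rw [hunion, h₁.2.2.1]
  · rw [virt_exComp, ← disjoint_iff_inter_eq_empty, disjoint_union_left]
    exact ⟨h₁.disjoint_virt, (disjoint_virt_virt_of_memL_exJoin h₂).2⟩

end Composition

/-- The full excitation graph is transitive: if `(γ₀, γ₁) ∈ E^full` and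
`(γ₁, γ₂) ∈ E^full`, then `(γ₀, γ₂) ∈ E^full`. -/
theorem eFull_transitive (ref : Finset Λ) (N : ℕ) (γ₀ γ₁ γ₂ : Finset Λ)
    (h₁ : EFull ref N γ₀ γ₁) (h₂ : EFull ref N γ₁ γ₂) :
    EFull ref N γ₀ γ₂ := by
  obtain ⟨α₁, hα₁L, hα₁, rfl⟩ := h₁
  obtain ⟨α₂, hα₂L, -, rfl⟩ := h₂
  exact ⟨exComp ref α₁ α₂ γ₀, memL_exComp hα₁L hα₂L, exComp_ne_ref hα₁, exJoin_exComp.symm⟩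

end CC
end

section
/- Let Λ be finite with |Λ| = K and 2N ≤ K, and let γ ∈ S have rank r = rk(γ) ≥ 1. Then for every 1 ≤ n ≤ r, the number of directed paths of length n from the reference 0 to γ in the full excitation graph — i.e. the number of sequences (γ₀, γ₁, …, γ_n) with γ₀ = 0, γ_n = γ and (γ_{i}, γ_{i+1}) ∈ E^full for 0 ≤ i < n — equals p(r, n) = Σ over all (r₁, …, r_n) with r₁ + … + r_n = r and each r_i ≥ 1 of (r! / (r₁!⋯r_n!))². In particular this count depends only on r and n, not on γ, N or K. -/
open Finset

namespace CC

variable {Λ : Type*} [DecidableEq Λ]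

open scoped Classical in
/-- The number of directed paths `(γ₀, γ₁, …, γ_n)` of length `n` from the reference `ref`
to `γ` in the full excitation graph. -/
noncomputable def pathCount [Fintype Λ] (ref : Finset Λ) (N n : ℕ) (γ : Finset Λ) : ℕ :=
  ((Finset.univ : Finset (Fin (n + 1) → Finset Λ)).filter fun p =>
    p 0 = ref ∧ p (Fin.last n) = γ ∧
      ∀ i : Fin n, EFull ref N (p i.castSucc) (p i.succ)).card

/-! A state `α` with `#α = #ref` is determined by its holes `ref \ α` and its particles
`α \ ref`, two sets of the same size. Along an edge `β → α ∨ β` the holes of `β` grow weakly and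
its particles grow strictly, and every such step is an edge. So a path of length `n` from `ref`
to `γ` amounts to two chains `∅ = A₀ ⊆ ⋯ ⊆ Aₙ = ref \ γ` and `∅ = B₀ ⊊ ⋯ ⊊ Bₙ = γ \ ref`
whose `i`-th steps add the same number `rᵢ ≥ 1` of elements. For fixed `(r₁, …, rₙ)` each chain
is counted by the multinomial coefficient `r! / (r₁! ⋯ rₙ!)`, by peeling off its last step. -/

section Chains

variable {n : ℕ}

def stepCard (A : Fin (n + 1) → Finset Λ) (i : Fin n) : ℕ := #(A i.succ \ A i.castSucc)

def chainsWith (T : Finset Λ) (c : Fin n → ℕ) : Finset (Fin (n + 1) → Finset Λ) :=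
  {A ∈ Fintype.piFinset fun _ => T.powerset |
    A 0 = ∅ ∧ A (Fin.last n) = T ∧ (∀ i : Fin n, A i.castSucc ⊆ A i.succ) ∧ stepCard A = c}

theorem mem_chainsWith {T : Finset Λ} {c : Fin n → ℕ} {A : Fin (n + 1) → Finset Λ} :
    A ∈ chainsWith T c ↔ A 0 = ∅ ∧ A (Fin.last n) = T ∧ Monotone A ∧ stepCard A = c := by
  rw [chainsWith, mem_filter, Fintype.mem_piFinset, Fin.monotone_iff_le_succ]
  refine ⟨fun h => h.2, fun h => ⟨fun i => ?_, h⟩⟩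
  rw [mem_powerset, ← h.2.1]
  exact Fin.monotone_iff_le_succ.2 h.2.2.1 (Fin.le_last i)

theorem subset_of_mem_chainsWith {T : Finset Λ} {c : Fin n → ℕ}
    {A : Fin (n + 1) → Finset Λ} (hA : A ∈ chainsWith T c) (i : Fin (n + 1)) : A i ⊆ T :=
  mem_powerset.1 (Fintype.mem_piFinset.1 (mem_filter.1 hA).1 i)

theorem subset_of_mem_chainsWith_sdiff {s t : Finset Λ} {c : Fin n → ℕ}
    {A : Fin (n + 1) → Finset Λ} (hA : A ∈ chainsWith (s \ t) c) (i : Fin (n + 1)) : A i ⊆ s :=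
  (subset_of_mem_chainsWith hA i).trans sdiff_subset

theorem disjoint_of_mem_chainsWith_sdiff {s t : Finset Λ} {c : Fin n → ℕ}
    {B : Fin (n + 1) → Finset Λ} (hB : B ∈ chainsWith (s \ t) c) (i : Fin (n + 1)) :
    Disjoint (B i) t :=
  disjoint_sdiff_self_left.mono_left (subset_of_mem_chainsWith hB i)

theorem stepCard_of_monotone {A : Fin (n + 1) → Finset Λ} (hA : Monotone A) (i : Fin n) :
    stepCard A i = #(A i.succ) - #(A i.castSucc) :=
  card_sdiff_of_subset (hA i.castSucc_le_succ)

theorem stepCard_init (A : Fin (n + 2) → Finset Λ) :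
    stepCard (Fin.init A) = Fin.init (stepCard A) := by
  funext i
  simp only [stepCard, Fin.init, Fin.succ_castSucc]

theorem sum_stepCard_add_card {A : Fin (n + 1) → Finset Λ} (hA : Monotone A) :
    ∑ i, stepCard A i + #(A 0) = #(A (Fin.last n)) := by
  induction n with
  | zero => simp
  | succ n ih =>
    have hinit : ∑ i : Fin n, stepCard A i.castSucc + #(A 0) =
        #(A (Fin.last n).castSucc) := by
      simpa only [stepCard_init, Fin.init, Fin.castSucc_zero] using
        ih (A := Fin.init A) (hA.comp Fin.strictMono_castSucc.monotone)
    rw [Fin.sum_univ_castSucc, add_right_comm, hinit, add_comm, stepCard, ← Fin.succ_last]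
    exact card_sdiff_add_card_eq_card (hA (Fin.last n).castSucc_le_succ)

theorem card_eq_of_stepCard_eq {A B : Fin (n + 1) → Finset Λ} (hA : Monotone A) (hB : Monotone B)
    (h₀ : #(A 0) = #(B 0)) (h : stepCard A = stepCard B) (i : Fin (n + 1)) :
    #(A i) = #(B i) := by
  induction i using Fin.induction with
  | zero => exact h₀
  | succ i ih =>
    have hi := congrFun h i
    rw [stepCard_of_monotone hA, stepCard_of_monotone hB] at hi
    have := card_le_card (hA i.castSucc_le_succ)
    have := card_le_card (hB i.castSucc_le_succ)
    omega

theorem snoc_mem_chainsWith {S T : Finset Λ} {c : Fin (n + 1) → ℕ} {A : Fin (n + 1) → Finset Λ}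
    (hA : A ∈ chainsWith S (Fin.init c)) (hST : S ⊆ T) (hc : #(T \ S) = c (Fin.last n)) :
    Fin.snoc A T ∈ chainsWith T c := by
  obtain ⟨h₀, hlast, hmono, hstep⟩ := mem_chainsWith.1 hA
  refine mem_chainsWith.2 ⟨?_, Fin.snoc_last _ _, ?_, ?_⟩
  · rw [← Fin.castSucc_zero, Fin.snoc_castSucc, h₀]
  · simpa only [Fin.insertNth_last'] using Fin.insertNth_last_monotone hmono T (hlast ▸ hST)
  · funext i
    rcases Fin.eq_castSucc_or_eq_last i with ⟨j, rfl⟩ | rfl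
    · simpa only [stepCard, Fin.succ_castSucc, Fin.snoc_castSucc, Fin.init] using congrFun hstep j
    · simpa only [stepCard, Fin.succ_last, Fin.snoc_last, Fin.snoc_castSucc, hlast] using hc

theorem card_chainsWith_succ (T : Finset Λ) (c : Fin (n + 1) → ℕ) (hc : c (Fin.last n) ≤ #T) :
    #(chainsWith T c) =
      ∑ S ∈ T.powersetCard (#T - c (Fin.last n)), #(chainsWith S (Fin.init c)) := by
  have hmaps : ∀ A ∈ chainsWith T c,
      A (Fin.last n).castSucc ∈ T.powersetCard (#T - c (Fin.last n)) := by
    intro A hA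
    obtain ⟨-, hlast, hmono, hstep⟩ := mem_chainsWith.1 hA
    have hsub := hmono (Fin.castSucc_le_succ (Fin.last n))
    have hcard := congrFun hstep (Fin.last n)
    rw [Fin.succ_last, hlast] at hsub
    rw [stepCard, Fin.succ_last, hlast] at hcard
    have := card_sdiff_add_card_eq_card hsub
    exact mem_powersetCard.2 ⟨hsub, by omega⟩
  rw [card_eq_sum_card_fiberwise hmaps]
  refine sum_congr rfl fun S hS => ?_
  obtain ⟨hST, hScard⟩ := mem_powersetCard.1 hS
  refine card_nbij' Fin.init (Fin.snoc · T) ?_ ?_ ?_ ?_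
  · intro A hA
    obtain ⟨hAc, rfl⟩ := mem_filter.1 (mem_coe.1 hA)
    obtain ⟨h₀, -, hmono, hstep⟩ := mem_chainsWith.1 hAc
    refine mem_chainsWith.2 ⟨h₀, rfl, hmono.comp Fin.strictMono_castSucc.monotone, ?_⟩
    rw [stepCard_init, hstep]
  · intro A hA
    rw [mem_coe] at hA ⊢
    have hTS : #(T \ S) = c (Fin.last n) := by
      rw [card_sdiff_of_subset hST]
      omega
    refine mem_filter.2 ⟨snoc_mem_chainsWith hA hST hTS, ?_⟩
    dsimp only
    rw [Fin.snoc_castSucc, (mem_chainsWith.1 hA).2.1]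
  · intro A hA
    rw [← (mem_chainsWith.1 (mem_filter.1 (mem_coe.1 hA)).1).2.1]
    exact Fin.snoc_init_self A
  · intro A _
    exact Fin.init_snoc _ _

theorem card_chainsWith_mul_prod_factorial (T : Finset Λ) (c : Fin n → ℕ) (hc : ∑ i, c i = #T) :
    #(chainsWith T c) * ∏ i, (c i).factorial = (#T).factorial := by
  induction n generalizing T with
  | zero =>
    have hT : T = ∅ := card_eq_zero.1 (by simpa using hc.symm)
    subst hT
    rw [card_eq_one.2 ⟨fun _ => ∅, ?_⟩]
    · simp
    ext A
    simp only [mem_chainsWith, mem_singleton, Fin.last_zero]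
    refine ⟨fun h => funext fun i => by rw [Fin.fin_one_eq_zero i, h.1], ?_⟩
    rintro rfl
    exact ⟨rfl, rfl, monotone_const, funext fun i => i.elim0⟩
  | succ n ih =>
    rw [Fin.sum_univ_castSucc] at hc
    have hm : #T - c (Fin.last n) = ∑ i : Fin n, c i.castSucc := by omega
    have hfiber : ∀ S ∈ T.powersetCard (#T - c (Fin.last n)),
        #(chainsWith S (Fin.init c)) * ∏ i : Fin n, (c i.castSucc).factorial =
          (#T - c (Fin.last n)).factorial := fun S hS => by
      rw [← (mem_powersetCard.1 hS).2]
      exact ih S (Fin.init c) ((mem_powersetCard.1 hS).2.trans hm).symm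
    calc #(chainsWith T c) * ∏ i, (c i).factorial
        = ∑ S ∈ T.powersetCard (#T - c (Fin.last n)), (#T - c (Fin.last n)).factorial *
            (c (Fin.last n)).factorial := by
          rw [card_chainsWith_succ T c (by omega), sum_mul, Fin.prod_univ_castSucc]
          exact sum_congr rfl fun S hS => by rw [← mul_assoc, hfiber S hS]
      _ = (#T).factorial := by
          rw [sum_const, card_powersetCard, smul_eq_mul, ← mul_assoc]
          conv_rhs => rw [← Nat.choose_mul_factorial_mul_factorial (Nat.sub_le #T (c (Fin.last n)))]
          rw [Nat.sub_sub_self (by omega)]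

theorem card_chainsWith {T : Finset Λ} {c : Fin n → ℕ} (hc : ∑ i, c i = #T) :
    #(chainsWith T c) = Nat.multinomial univ c := by
  have hspec := Nat.multinomial_spec univ c
  rw [hc, ← card_chainsWith_mul_prod_factorial T c hc, mul_comm] at hspec
  exact (Nat.eq_of_mul_eq_mul_right (prod_pos fun i _ => Nat.factorial_pos _) hspec).symm

end Chains

section HolesAndParticles

variable {ref α β A B : Finset Λ}

theorem eq_of_sdiff_eq_of_sdiff_eq (h₁ : ref \ α = ref \ β) (h₂ : α \ ref = β \ ref) :
    α = β := by
  have h : symmDiff ref α = symmDiff ref β := by rw [symmDiff_def, symmDiff_def, h₁, h₂]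
  simpa using congrArg (symmDiff ref) h

theorem sdiff_sdiff_union (hA : A ⊆ ref) (hB : Disjoint B ref) :
    ref \ ((ref \ A) ∪ B) = A := by
  ext x
  have := @hA x
  have : x ∈ B → x ∉ ref := fun h => disjoint_left.1 hB h
  simp only [mem_sdiff, mem_union]
  tauto

theorem sdiff_union_sdiff (hB : Disjoint B ref) : ((ref \ A) ∪ B) \ ref = B := by
  ext x
  have : x ∈ B → x ∉ ref := fun h => disjoint_left.1 hB h
  simp only [mem_sdiff, mem_union]
  tauto

theorem card_sdiff_union (hA : A ⊆ ref) (hB : Disjoint B ref) :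
    #((ref \ A) ∪ B) + #A = #ref + #B := by
  rw [card_union_of_disjoint (hB.symm.mono_left sdiff_subset)]
  have := card_sdiff_add_card_eq_card hA
  omega

theorem sdiff_exJoin : ref \ exJoin ref α β = (ref \ α) ∪ (ref \ β) := by
  ext x
  simp only [exJoin, occ, virt, mem_sdiff, mem_union, mem_inter]
  tauto

theorem exJoin_sdiff : exJoin ref α β \ ref = (α \ ref) ∪ (β \ ref) := by
  ext x
  simp only [exJoin, occ, virt, mem_sdiff, mem_union, mem_inter]
  tauto

theorem card_occ_union_occ :
    #(occ ref α ∪ occ ref β) + #((ref \ α) ∩ (ref \ β)) = #ref := by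
  rw [← card_union_of_disjoint]
  · congr 1
    ext x
    simp only [occ, mem_union, mem_inter, mem_sdiff]
    tauto
  · rw [disjoint_left]
    simp only [occ, mem_union, mem_inter, mem_sdiff]
    tauto

end HolesAndParticles

theorem eFull_iff {ref : Finset Λ} {N : ℕ} (href : #ref = N) {β γ : Finset Λ} :
    EFull ref N β γ ↔ #β = N ∧ #γ = N ∧ ref \ β ⊆ ref \ γ ∧ β \ ref ⊂ γ \ ref := by
  constructor
  · rintro ⟨α, ⟨hα, hβ, hocc, hvirt⟩, hne, rfl⟩
    have hholes : Disjoint (ref \ α) (ref \ β) := by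
      have := card_occ_union_occ (ref := ref) (α := α) (β := β)
      rw [hocc, href, Nat.add_eq_left, card_eq_zero] at this
      exact disjoint_iff_inter_eq_empty.2 this
    have hparticles : Disjoint (α \ ref) (β \ ref) := disjoint_iff_inter_eq_empty.2 hvirt
    have hα_ne : α \ ref ≠ ∅ := fun h =>
      hne (eq_of_subset_of_card_le (sdiff_eq_empty_iff_subset.1 h) (by rw [hα, href]))
    refine ⟨hβ, ?_, ?_, ?_⟩
    · rw [← href, ← card_sdiff_eq_card_sdiff_iff, exJoin_sdiff, sdiff_exJoin,
        card_union_of_disjoint hholes, card_union_of_disjoint hparticles,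
        card_sdiff_comm (hα.trans href.symm), card_sdiff_comm (hβ.trans href.symm)]
    · rw [sdiff_exJoin]
      exact subset_union_right
    · rw [exJoin_sdiff]
      exact right_lt_sup.2 fun h => hα_ne (hparticles.eq_bot_of_le h)
  · rintro ⟨hβ, hγ, hholes, hparticles⟩
    -- `α` creates exactly the holes and the particles that `γ` has beyond `β`.
    set A := (ref \ γ) \ (ref \ β)
    set B := (γ \ ref) \ (β \ ref)
    have hA : A ⊆ ref := sdiff_subset.trans sdiff_subset
    have hB : Disjoint B ref := disjoint_sdiff_self_left.mono_left sdiff_subset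
    refine ⟨(ref \ A) ∪ B, ⟨?_, hβ, ?_, ?_⟩, ?_, ?_⟩
    · have := card_sdiff_union hA hB
      have : #A + #(ref \ β) = #(ref \ γ) := card_sdiff_add_card_eq_card hholes
      have : #B + #(β \ ref) = #(γ \ ref) := card_sdiff_add_card_eq_card hparticles.subset
      have := card_sdiff_comm (hβ.trans href.symm)
      have := card_sdiff_comm (hγ.trans href.symm)
      omega
    · have := card_occ_union_occ (ref := ref) (α := (ref \ A) ∪ B) (β := β)
      rwa [sdiff_sdiff_union hA hB, sdiff_inter_self, card_empty, add_zero, href] at this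
    · rw [virt, virt, sdiff_union_sdiff hB, sdiff_inter_self]
    · intro h
      have := congrArg (· \ ref) h
      simp only [sdiff_union_sdiff hB, sdiff_self] at this
      exact hparticles.not_subset (sdiff_eq_empty_iff_subset.1 this)
    · refine eq_of_sdiff_eq_of_sdiff_eq (ref := ref) ?_ ?_
      · rw [sdiff_exJoin, sdiff_sdiff_union hA hB, sdiff_union_of_subset hholes]
      · rw [exJoin_sdiff, sdiff_union_sdiff hB, sdiff_union_of_subset hparticles.subset]

section Paths

variable [Fintype Λ] {ref γ : Finset Λ} {N n : ℕ}

open scoped Classical in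
noncomputable def paths (ref : Finset Λ) (N n : ℕ) (γ : Finset Λ) :
    Finset (Fin (n + 1) → Finset Λ) :=
  {p | p 0 = ref ∧ p (Fin.last n) = γ ∧ ∀ i : Fin n, EFull ref N (p i.castSucc) (p i.succ)}

theorem pathCount_eq_card_paths : pathCount ref N n γ = #(paths ref N n γ) := rfl

theorem sdiff_mem_chainsWith_of_mem_paths (href : #ref = N) {p : Fin (n + 1) → Finset Λ}
    (hp : p ∈ paths ref N n γ) :
    (fun i => ref \ p i) ∈ chainsWith (ref \ γ) (stepCard fun i => p i \ ref) ∧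
      (fun i => p i \ ref) ∈ chainsWith (γ \ ref) (stepCard fun i => p i \ ref) ∧
      ∀ i, 0 < stepCard (fun i => p i \ ref) i := by
  obtain ⟨h₀, hlast, hedge⟩ : p 0 = ref ∧ p (Fin.last n) = γ ∧
      ∀ i : Fin n, EFull ref N (p i.castSucc) (p i.succ) := by
    simpa [paths] using hp
  have hE := fun i => (eFull_iff href).1 (hedge i)
  have hholes : Monotone fun i => ref \ p i := Fin.monotone_iff_le_succ.2 fun i => (hE i).2.2.1
  have hparticles : Monotone fun i => p i \ ref :=
    Fin.monotone_iff_le_succ.2 fun i => (hE i).2.2.2.le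
  have hcard (i : Fin (n + 1)) : #ref = #(p i) := by
    induction i using Fin.cases with
    | zero => rw [h₀]
    | succ i => rw [href, (hE i).2.1]
  have hstep : stepCard (fun i => ref \ p i) = stepCard fun i => p i \ ref := by
    funext i
    rw [stepCard_of_monotone hholes, stepCard_of_monotone hparticles,
      card_sdiff_comm (hcard _), card_sdiff_comm (hcard _)]
  refine ⟨mem_chainsWith.2 ⟨by simp [h₀], by simp [hlast], hholes, hstep⟩,
    mem_chainsWith.2 ⟨by simp [h₀], by simp [hlast], hparticles, rfl⟩,
    fun i => card_pos.2 (sdiff_nonempty.2 (hE i).2.2.2.not_subset)⟩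

theorem sdiff_union_mem_paths (href : #ref = N) {c : Fin n → ℕ} (hc : ∀ i, 0 < c i)
    {A B : Fin (n + 1) → Finset Λ} (hA : A ∈ chainsWith (ref \ γ) c)
    (hB : B ∈ chainsWith (γ \ ref) c) :
    (fun i => (ref \ A i) ∪ B i) ∈ paths ref N n γ := by
  obtain ⟨hA₀, hAlast, hAmono, hAstep⟩ := mem_chainsWith.1 hA
  obtain ⟨hB₀, hBlast, hBmono, hBstep⟩ := mem_chainsWith.1 hB
  have hAref := subset_of_mem_chainsWith_sdiff hA
  have hBref := disjoint_of_mem_chainsWith_sdiff hB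
  have hcard (i) : #((ref \ A i) ∪ B i) = N := by
    have := card_sdiff_union (hAref i) (hBref i)
    have := card_eq_of_stepCard_eq hAmono hBmono (by rw [hA₀, hB₀]) (hAstep.trans hBstep.symm) i
    omega
  simp only [paths, mem_filter, mem_univ, true_and]
  refine ⟨by simp [hA₀, hB₀], ?_, fun i => (eFull_iff href).2 ⟨hcard _, hcard _, ?_, ?_⟩⟩
  · exact eq_of_sdiff_eq_of_sdiff_eq (by rw [sdiff_sdiff_union (hAref _) (hBref _), hAlast])
      (by rw [sdiff_union_sdiff (hBref _), hBlast])
  · rw [sdiff_sdiff_union (hAref _) (hBref _), sdiff_sdiff_union (hAref _) (hBref _)]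
    exact hAmono i.castSucc_le_succ
  · rw [sdiff_union_sdiff (hBref _), sdiff_union_sdiff (hBref _)]
    refine (hBmono i.castSucc_le_succ).ssubset_of_not_subset fun h => (hc i).ne ?_
    rw [← congrFun hBstep i, stepCard, sdiff_eq_empty_iff_subset.2 h, card_empty]

theorem card_filter_paths (href : #ref = N) {c : Fin n → ℕ} (hc : ∀ i, 0 < c i) :
    #{p ∈ paths ref N n γ | stepCard (fun i => p i \ ref) = c} =
      #(chainsWith (ref \ γ) c) * #(chainsWith (γ \ ref) c) := by
  rw [← card_product]
  refine card_nbij' (fun p => (fun i => ref \ p i, fun i => p i \ ref))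
    (fun AB i => (ref \ AB.1 i) ∪ AB.2 i) ?_ ?_ ?_ ?_
  · intro p hp
    obtain ⟨hpath, rfl⟩ := mem_filter.1 (mem_coe.1 hp)
    obtain ⟨hholes, hparticles, -⟩ := sdiff_mem_chainsWith_of_mem_paths href hpath
    exact mem_product.2 ⟨hholes, hparticles⟩
  · rintro ⟨A, B⟩ hAB
    obtain ⟨hA, hB⟩ := mem_product.1 (mem_coe.1 hAB)
    refine mem_filter.2 ⟨sdiff_union_mem_paths href hc hA hB, ?_⟩
    simp only [sdiff_union_sdiff (disjoint_of_mem_chainsWith_sdiff hB _)]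
    exact (mem_chainsWith.1 hB).2.2.2
  · intro p _
    funext i
    exact eq_of_sdiff_eq_of_sdiff_eq (sdiff_sdiff_union sdiff_subset disjoint_sdiff_self_left)
      (sdiff_union_sdiff disjoint_sdiff_self_left)
  · rintro ⟨A, B⟩ hAB
    obtain ⟨hA, hB⟩ := mem_product.1 (mem_coe.1 hAB)
    ext i : 2
    · exact sdiff_sdiff_union (subset_of_mem_chainsWith_sdiff hA i)
        (disjoint_of_mem_chainsWith_sdiff hB i)
    · exact sdiff_union_sdiff (disjoint_of_mem_chainsWith_sdiff hB i)

end Paths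

theorem pathCount_eq_general [Fintype Λ] (ref : Finset Λ) (N r n : ℕ) (href : ref.card = N)
    (γ : Finset Λ) (hγ : γ.card = N) (hr : rk ref γ = r) :
    pathCount ref N n γ =
      ∑ c ∈ (Finset.Nat.antidiagonalTuple n r).filter fun c => ∀ i, 1 ≤ c i,
        (Nat.multinomial Finset.univ c) ^ 2 := by
  have hparticles : #(γ \ ref) = r := hr
  have hholes : #(ref \ γ) = r := (card_sdiff_comm (hγ.trans href.symm)).symm.trans hparticles
  have hsteps : ∀ p ∈ paths ref N n γ, (stepCard fun i => p i \ ref) ∈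
      (Finset.Nat.antidiagonalTuple n r).filter fun c => ∀ i, 1 ≤ c i := by
    intro p hp
    obtain ⟨-, hchain, hpos⟩ := sdiff_mem_chainsWith_of_mem_paths href hp
    obtain ⟨h₀, hlast, hmono, -⟩ := mem_chainsWith.1 hchain
    refine mem_filter.2 ⟨Nat.mem_antidiagonalTuple.2 ?_, hpos⟩
    rw [← hparticles, ← hlast, ← sum_stepCard_add_card hmono, h₀, card_empty, add_zero]
  rw [pathCount_eq_card_paths, card_eq_sum_card_fiberwise hsteps]
  refine sum_congr rfl fun c hc => ?_
  obtain ⟨hsum, hpos⟩ := mem_filter.1 hc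
  rw [Nat.mem_antidiagonalTuple] at hsum
  rw [card_filter_paths href hpos, card_chainsWith (hsum.trans hholes.symm),
    card_chainsWith (hsum.trans hparticles.symm), sq]

/-- Let `|Λ| = K`, `2N ≤ K`, and let `γ ∈ S` have rank `r ≥ 1`.  Then
for every `1 ≤ n ≤ r` the number of directed paths of length `n` from the reference `0`
to `γ` in the full excitation graph equals
`p(r,n) = Σ_{r₁+⋯+r_n = r, r_i ≥ 1} (r! / (r₁!⋯r_n!))²`;
in particular it depends only on `r` and `n`. -/
theorem pathCount_eq [Fintype Λ] (ref : Finset Λ) (N K r n : ℕ)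
    (hK : Fintype.card Λ = K) (hN : 1 ≤ N) (h2N : 2 * N ≤ K) (href : ref.card = N)
    (γ : Finset Λ) (hγ : γ.card = N) (hr : rk ref γ = r) (hr1 : 1 ≤ r)
    (hn1 : 1 ≤ n) (hnr : n ≤ r) :
    pathCount ref N n γ =
      ∑ c ∈ (Finset.Nat.antidiagonalTuple n r).filter fun c => ∀ i, 1 ≤ c i,
        (Nat.multinomial Finset.univ c) ^ 2 :=
  pathCount_eq_general ref N r n href γ hγ hr

end CC
end
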